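/- arXiv:math/0501053 — 2 statements merged into one kernel-verified Lean document; each statement's English description precedes it below -/
import Mathlib

section
/- For every n ≥ 3 the following hold: (i) for every f ∈ [IA_n, IA_n] and every x ∈ F_n, the element f(x)·x^{-1} lies in F_n^{(3)}; (ii) for each f ∈ [IA_n, IA_n], the assignment sending the class of x in F_n/F_n^{(2)} to the class of f(x)·x^{-1} in F_n^{(3)}/F_n^{(4)} is a well-defined group homomorphism δ^{(2)}(f) : F_n/F_n^{(2)} → F_n^{(3)}/F_n^{(4)}; (iii) the resulting map δ^{(2)} from [IA_n, IA_n] to the abelian group Hom(F_n/F_n^{(2)}, F_n^{(3)}/F_n^{(4)}) (under pointwise addition) is a group homomorphism. -/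
/-- The subgroup of `Aut(F_n)` of automorphisms acting trivially on
`F_n / F_n^{(i+1)}`, where `F_n^{(k+1)} = lowerCentralSeries F_n k`. -/
def KSub (n i : ℕ) : Subgroup (MulAut (FreeGroup (Fin n))) where
  carrier := {φ | ∀ x, φ x * x⁻¹ ∈ (⊤ : Subgroup (FreeGroup (Fin n))).lowerCentralSeries i}
  one_mem' := by intro x; simpa using ((⊤ : Subgroup (FreeGroup (Fin n))).lowerCentralSeries i).one_mem
  mul_mem' := by
    intro a b ha hb x
    have h : (a * b) x * x⁻¹ = (a (b x) * (b x)⁻¹) * (b x * x⁻¹) := by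
      simp [MulAut.mul_apply, mul_assoc]
    rw [h]
    exact mul_mem (ha (b x)) (hb x)
  inv_mem' := by
    intro a ha x
    have h := inv_mem (ha (a⁻¹ x))
    simp only [MulAut.apply_inv_self, mul_inv_rev, inv_inv] at h
    simpa using h

/-- `IA_n`, the group of automorphisms of the free group `F_n` acting trivially on
its abelianization. -/
def IA (n : ℕ) : Subgroup (MulAut (FreeGroup (Fin n))) := KSub n 1

instance KSub_normal (n i : ℕ) : (KSub n i).Normal := by
  constructor
  intro φ hφ ψ x
  have h2 : ψ (φ (ψ⁻¹ x) * (ψ⁻¹ x)⁻¹) ∈ (⊤ : Subgroup (FreeGroup (Fin n))).lowerCentralSeries i := by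
    apply Subgroup.lowerCentralSeries.map (ψ : FreeGroup (Fin n) →* FreeGroup (Fin n)) i
    exact Subgroup.mem_map_of_mem _ (hφ (ψ⁻¹ x))
  simpa [MulAut.mul_apply, map_mul] using h2

abbrev Fr (n : ℕ) := FreeGroup (Fin n)
abbrev L (n i : ℕ) : Subgroup (Fr n) := (⊤ : Subgroup (Fr n)).lowerCentralSeries i
abbrev Q34 (n : ℕ) := L n 2 ⧸ ((L n 3).subgroupOf (L n 2))

/-!
If an endomorphism `f` of a group `G` satisfies `f(x) x⁻¹ ∈ G^{(k)}` for all `x`, then modulo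
`G^{(k+1)}` it multiplies every element by a central element, so it fixes every commutator modulo
`G^{(k+1)}`. For `f, g ∈ IA_n` this gives `f(g(x)) ≡ g(f(x))` modulo `F_n^{(3)}`, hence (i).
For `f` as in (ii), the identity `(f(ab)(ab)⁻¹)⁻¹ · f(a)a⁻¹ · f(b)b⁻¹ = [a, b f(b)⁻¹] ∈ F_n^{(4)}`
makes `x ↦ f(x)x⁻¹` a homomorphism to `F_n^{(3)}/F_n^{(4)}`, which kills `F_n^{(2)}` by the first
fact. The first fact also gives `f(v) ≡ v` modulo `F_n^{(4)}` for `v = g(x)x⁻¹`, whence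
`(fg)(x)x⁻¹ ≡ f(x)x⁻¹ · g(x)x⁻¹`, which is (iii).
-/

open Subgroup QuotientGroup commutatorElement

section LowerCentralSeries

variable {G : Type*} [Group G]

-- Mathlib's indexing: `γ 0 = G` and `γ (k + 1) = ⁅γ k, G⁆`, so `γ k` is the paper's `G^{(k+1)}`.
local notation "γ" => Subgroup.lowerCentralSeries (⊤ : Subgroup _)

theorem commutatorElement_mem_lowerCentralSeries_succ_left {k : ℕ} {u : G} (hu : u ∈ γ k)
    (x : G) : ⁅u, x⁆ ∈ γ (k + 1) :=
  commutator_mem_commutator hu (mem_top x)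

theorem commutatorElement_mem_lowerCentralSeries_succ_right {k : ℕ} {u : G} (hu : u ∈ γ k)
    (x : G) : ⁅x, u⁆ ∈ γ (k + 1) :=
  commutatorElement_inv u x ▸ inv_mem (commutatorElement_mem_lowerCentralSeries_succ_left hu x)

theorem mk_mem_center_of_mem_lowerCentralSeries {k : ℕ} {u : G} (hu : u ∈ γ k) :
    (u : G ⧸ γ (k + 1)) ∈ center (G ⧸ γ (k + 1)) := by
  refine mem_center_iff.mpr fun q => QuotientGroup.induction_on q fun x => ?_
  rw [← mk_mul, ← mk_mul, QuotientGroup.eq, show (x * u)⁻¹ * (u * x) = ⁅u⁻¹, x⁻¹⁆ by group]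
  exact commutatorElement_mem_lowerCentralSeries_succ_left (inv_mem hu) _

theorem commutatorElement_mul_left_of_mem_center {c : G} (hc : c ∈ center G) (a b : G) :
    ⁅c * a, b⁆ = ⁅a, b⁆ := by
  calc ⁅c * a, b⁆ = c * (a * b * a⁻¹) * c⁻¹ * b⁻¹ := by group
    _ = ⁅a, b⁆ := by rw [← mem_center_iff.mp hc]; group

theorem commutatorElement_mul_right_of_mem_center {c : G} (hc : c ∈ center G) (a b : G) :
    ⁅a, c * b⁆ = ⁅a, b⁆ := by
  rw [← commutatorElement_inv, commutatorElement_mul_left_of_mem_center hc, commutatorElement_inv]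

theorem mul_inv_mem_lowerCentralSeries_succ_of_mem_commutator (f : G →* G) {k : ℕ}
    (hf : ∀ x, f x * x⁻¹ ∈ γ k) {u : G} (hu : u ∈ γ 1) : f u * u⁻¹ ∈ γ (k + 1) := by
  let π := mk' (γ (k + 1) : Subgroup G)
  have hπ : ∀ x, π (f x) = π (f x * x⁻¹) * π x := fun x => by rw [← map_mul, inv_mul_cancel_right]
  have hcenter : ∀ x, π (f x * x⁻¹) ∈ center (G ⧸ γ (k + 1)) :=
    fun x => mk_mem_center_of_mem_lowerCentralSeries (hf x)
  suffices γ 1 ≤ (π.comp f).eqLocus π by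
    rw [← div_eq_mul_inv, ← eq_iff_div_mem]
    exact this hu
  refine commutator_le.mpr fun a _ b _ => ?_
  change π (f ⁅a, b⁆) = π ⁅a, b⁆
  rw [map_commutatorElement, map_commutatorElement, hπ a, hπ b,
    commutatorElement_mul_left_of_mem_center (hcenter a),
    commutatorElement_mul_right_of_mem_center (hcenter b),
    ← map_commutatorElement]

theorem mk_apply_eq_self_of_mem_commutator (f : G →* G) {k : ℕ} (hf : ∀ x, f x * x⁻¹ ∈ γ k)
    {u : G} (hu : u ∈ γ 1) : (f u : G ⧸ γ (k + 1)) = u :=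
  eq_iff_div_mem.mpr <| (div_eq_mul_inv (f u) u).symm ▸
    mul_inv_mem_lowerCentralSeries_succ_of_mem_commutator f hf hu

theorem mk_apply_apply_comm {f g : G →* G} (hf : ∀ x, f x * x⁻¹ ∈ γ 1)
    (hg : ∀ x, g x * x⁻¹ ∈ γ 1) (x : G) : (f (g x) : G ⧸ γ 2) = g (f x) := by
  have expand : ∀ {φ ψ : G →* G}, (∀ x, φ x * x⁻¹ ∈ γ 1) → (∀ x, ψ x * x⁻¹ ∈ γ 1) →
      (φ (ψ x) : G ⧸ γ 2) = (ψ x * x⁻¹ : G) * (φ x * x⁻¹ : G) * x := fun {φ ψ} hφ hψ => by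
    have h : φ (ψ x) = φ (ψ x * x⁻¹) * (φ x * x⁻¹) * x := by
      rw [mul_assoc, inv_mul_cancel_right, ← map_mul, inv_mul_cancel_right]
    rw [h, mk_mul, mk_mul, mk_apply_eq_self_of_mem_commutator φ hφ (hψ x)]
  rw [expand hf hg, expand hg hf,
    mem_center_iff.mp (mk_mem_center_of_mem_lowerCentralSeries (hg x))]

theorem commutatorElement_apply_mul_inv_mem_lowerCentralSeries_two {f g : MulAut G}
    (hf : ∀ x, f x * x⁻¹ ∈ γ 1) (hg : ∀ x, g x * x⁻¹ ∈ γ 1) (x : G) :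
    ⁅f, g⁆ x * x⁻¹ ∈ γ 2 := by
  set y := f⁻¹ (g⁻¹ x)
  have hx : x = g (f y) := by simp [y]
  have hfgx : ⁅f, g⁆ x = f (g y) := by simp [y, commutatorElement_def, MulAut.mul_apply]
  rw [hfgx, hx, ← div_eq_mul_inv, ← eq_iff_div_mem]
  exact mk_apply_apply_comm (f := f.toMonoidHom) (g := g.toMonoidHom) hf hg y

variable (G) in
abbrev LowerCentralGraded (k : ℕ) : Type _ := γ k ⧸ (γ (k + 1)).subgroupOf (γ k : Subgroup G)

def displacementHom (f : G →* G) {k : ℕ} (hf : ∀ x, f x * x⁻¹ ∈ γ k) :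
    G ⧸ γ 1 →* LowerCentralGraded G k :=
  QuotientGroup.lift (γ 1 : Subgroup G)
    (MonoidHom.mk' (fun x => ((⟨f x * x⁻¹, hf x⟩ : γ k) : LowerCentralGraded G k))
      fun a b => by
        rw [← mk_mul, QuotientGroup.eq, mem_subgroupOf]
        have hb : b * (f b)⁻¹ ∈ γ k := by simpa only [mul_inv_rev, inv_inv] using inv_mem (hf b)
        convert commutatorElement_mem_lowerCentralSeries_succ_right hb a using 1
        change (f (a * b) * (a * b)⁻¹)⁻¹ * (f a * a⁻¹ * (f b * b⁻¹)) = ⁅a, b * (f b)⁻¹⁆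
        rw [map_mul]
        group)
    fun u hu => (eq_one_iff _).mpr <| mem_subgroupOf.mpr <|
      mul_inv_mem_lowerCentralSeries_succ_of_mem_commutator f hf hu

theorem displacementHom_mk (f : G →* G) {k : ℕ} (hf : ∀ x, f x * x⁻¹ ∈ γ k) (x : G) :
    displacementHom f hf x = ((⟨f x * x⁻¹, hf x⟩ : γ k) : LowerCentralGraded G k) :=
  rfl

theorem displacementHom_comp {f g : G →* G} {k : ℕ} (hk : 1 ≤ k) (hf : ∀ x, f x * x⁻¹ ∈ γ k)
    (hg : ∀ x, g x * x⁻¹ ∈ γ k) (hfg : ∀ x, f (g x) * x⁻¹ ∈ γ k) (y : G ⧸ γ 1) :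
    displacementHom (f.comp g) hfg y = displacementHom f hf y * displacementHom g hg y := by
  induction y using QuotientGroup.induction_on with | H x =>
  rw [displacementHom_mk, displacementHom_mk, displacementHom_mk, ← mk_mul, QuotientGroup.eq,
    mem_subgroupOf]
  set v := g x * x⁻¹
  set w := f x * x⁻¹
  have hv : v ∈ γ 1 := Subgroup.lowerCentralSeries_antitone ⊤ hk (hg x)
  change (f (g x) * x⁻¹)⁻¹ * (w * v) ∈ γ (k + 1)
  have h : (f (g x) * x⁻¹)⁻¹ * (w * v) =
      (v * w)⁻¹ * (f v * v⁻¹)⁻¹ * (v * w) * ⁅w⁻¹, v⁻¹⁆ := by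
    rw [show g x = v * x by simp [v], map_mul]
    simp only [w]
    group
  rw [h]
  exact mul_mem (Normal.conj_mem' inferInstance _
      (inv_mem (mul_inv_mem_lowerCentralSeries_succ_of_mem_commutator f hf hv)) _)
    (commutatorElement_mem_lowerCentralSeries_succ_left (inv_mem (hf x)) _)

end LowerCentralSeries

theorem commutator_IA_le_KSub_two (n : ℕ) : ⁅IA n, IA n⁆ ≤ KSub n 2 :=
  commutator_le.mpr fun _ hf _ hg =>
    commutatorElement_apply_mul_inv_mem_lowerCentralSeries_two hf hg

theorem stmt2_general (n : ℕ) :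
    (∀ f ∈ ⁅IA n, IA n⁆, ∀ x : Fr n, f x * x⁻¹ ∈ L n 2) ∧
    (∀ f ∈ ⁅IA n, IA n⁆, ∀ hf : ∀ x : Fr n, f x * x⁻¹ ∈ L n 2,
      ∃ δ : (Fr n ⧸ L n 1) →* Q34 n,
        ∀ x : Fr n, δ (QuotientGroup.mk x) = QuotientGroup.mk ⟨f x * x⁻¹, hf x⟩) ∧
    (∀ f g, f ∈ ⁅IA n, IA n⁆ → g ∈ ⁅IA n, IA n⁆ →
      ∀ (hf : ∀ x : Fr n, f x * x⁻¹ ∈ L n 2) (hg : ∀ x : Fr n, g x * x⁻¹ ∈ L n 2)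
        (hfg : ∀ x : Fr n, (f * g) x * x⁻¹ ∈ L n 2)
        (δf δg δfg : (Fr n ⧸ L n 1) →* Q34 n),
        (∀ x : Fr n, δf (QuotientGroup.mk x) = QuotientGroup.mk ⟨f x * x⁻¹, hf x⟩) →
        (∀ x : Fr n, δg (QuotientGroup.mk x) = QuotientGroup.mk ⟨g x * x⁻¹, hg x⟩) →
        (∀ x : Fr n, δfg (QuotientGroup.mk x) = QuotientGroup.mk ⟨(f * g) x * x⁻¹, hfg x⟩) →
        ∀ y, δfg y = δf y * δg y) := by
  refine ⟨fun f hf => commutator_IA_le_KSub_two n hf,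
    fun f _ hf => ⟨displacementHom f.toMonoidHom hf, displacementHom_mk _ hf⟩, ?_⟩
  intro f g _ _ hf hg hfg δf δg δfg hδf hδg hδfg y
  induction y using QuotientGroup.induction_on with | H x =>
  rw [hδf, hδg, hδfg]
  exact displacementHom_comp (f := f.toMonoidHom) (g := g.toMonoidHom) one_le_two hf hg hfg x

theorem stmt2 (n : ℕ) (hn : 3 ≤ n) :
    (∀ f ∈ ⁅IA n, IA n⁆, ∀ x : Fr n, f x * x⁻¹ ∈ L n 2) ∧
    (∀ f ∈ ⁅IA n, IA n⁆, ∀ hf : ∀ x : Fr n, f x * x⁻¹ ∈ L n 2,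
      ∃ δ : (Fr n ⧸ L n 1) →* Q34 n,
        ∀ x : Fr n, δ (QuotientGroup.mk x) = QuotientGroup.mk ⟨f x * x⁻¹, hf x⟩) ∧
    (∀ f g, f ∈ ⁅IA n, IA n⁆ → g ∈ ⁅IA n, IA n⁆ →
      ∀ (hf : ∀ x : Fr n, f x * x⁻¹ ∈ L n 2) (hg : ∀ x : Fr n, g x * x⁻¹ ∈ L n 2)
        (hfg : ∀ x : Fr n, (f * g) x * x⁻¹ ∈ L n 2)
        (δf δg δfg : (Fr n ⧸ L n 1) →* Q34 n),
        (∀ x : Fr n, δf (QuotientGroup.mk x) = QuotientGroup.mk ⟨f x * x⁻¹, hf x⟩) →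
        (∀ x : Fr n, δg (QuotientGroup.mk x) = QuotientGroup.mk ⟨g x * x⁻¹, hg x⟩) →
        (∀ x : Fr n, δfg (QuotientGroup.mk x) = QuotientGroup.mk ⟨(f * g) x * x⁻¹, hfg x⟩) →
        ∀ y, δfg y = δf y * δg y) :=
  stmt2_general n
end

section
/- Let n ≥ 2, let H = ℤⁿ with standard basis e_1,…,e_n and dual basis e_1*,…,e_n* of Hom(H,ℤ). Then the ℤ-linear map H → ∧²H ⊗ Hom(H,ℤ) defined by e_k ↦ Σ_{i=1}^{n} (e_k ∧ e_i) ⊗ e_i* is injective. Moreover, its image is a saturated subgroup: the quotient (∧²H ⊗ Hom(H,ℤ))/image is torsion-free. -/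
open ExteriorAlgebra TensorProduct

/-!
For `k ≠ j`, pairing with `(e_j* ∧ e_k*) ⊗ e_k` reads off the coordinate `x_j` from
`μ(x) = Σᵢ (x ∧ eᵢ) ⊗ eᵢ*`, so `μ` has a left inverse `ψ`. The image of `μ` is therefore
saturated in the free module `∧²H ⊗ Hom(H,ℤ)`: if `c • t = μ x` then
`c • μ (ψ t) = μ (ψ (c • t)) = c • t`, and cancelling `c` gives `t = μ (ψ t)`.
-/

lemma wedge_mem {M : Type*} [AddCommGroup M] [Module ℤ M] (x y : M) :
    ι ℤ x * ι ℤ y ∈ ⋀[ℤ]^2 M := by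
  have h : ιMulti ℤ 2 ![x, y] = ι ℤ x * ι ℤ y := by
    simp [ιMulti_apply, List.ofFn_succ]
  exact h ▸ ιMulti_range ℤ 2 (Set.mem_range_self ![x, y])

/-- The wedge product `M × M → ∧²M` as a bilinear map. -/
def wedge (M : Type*) [AddCommGroup M] [Module ℤ M] : M →ₗ[ℤ] M →ₗ[ℤ] ↥(⋀[ℤ]^2 M) :=
  LinearMap.mk₂ ℤ (fun x y => ⟨ι ℤ x * ι ℤ y, wedge_mem x y⟩)
    (fun x x' y => Subtype.ext (by simp [add_mul]))
    (fun c x y => Subtype.ext (by simp [smul_mul_assoc, mul_assoc]; exact zsmul_eq_mul _ _))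
    (fun x y y' => Subtype.ext (by simp [mul_add]))
    (fun c x y => Subtype.ext (by simp [mul_assoc]; exact zsmul_eq_mul _ _))


/-- The map `H → ∧²H ⊗ Hom(H,ℤ)` with `e_k ↦ Σᵢ (e_k ∧ e_i) ⊗ e_i*`, where `H = ℤⁿ`. -/
noncomputable def muMap (n : ℕ) :
    (Fin n → ℤ) →ₗ[ℤ] (↥(⋀[ℤ]^2 (Fin n → ℤ)) ⊗[ℤ] ((Fin n → ℤ) →ₗ[ℤ] ℤ)) :=
  ∑ i : Fin n,
    ((TensorProduct.mk ℤ ↥(⋀[ℤ]^2 (Fin n → ℤ)) ((Fin n → ℤ) →ₗ[ℤ] ℤ)).flip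
        (LinearMap.proj i)) ∘ₗ ((wedge (Fin n → ℤ)).flip (Pi.single i 1))

namespace Module.IsTorsionFree

variable {R M N : Type*} [Ring R] [AddCommGroup M] [Module R M] [AddCommGroup N] [Module R N]

theorem quotient_range_of_leftInverse [IsTorsionFree R N] {f : M →ₗ[R] N} {g : N →ₗ[R] M}
    (hgf : g ∘ₗ f = LinearMap.id) : IsTorsionFree R (N ⧸ LinearMap.range f) where
  isSMulRegular r hr := by
    rintro ⟨a⟩ ⟨b⟩ hab
    obtain ⟨x, hx⟩ : r • (a - b) ∈ LinearMap.range f := by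
      rw [← Submodule.Quotient.mk_eq_zero, Submodule.Quotient.mk_smul,
        Submodule.Quotient.mk_sub, smul_sub, sub_eq_zero]
      exact hab
    have hfg : f (g (a - b)) = a - b := hr.isSMulRegular <| by
      change r • f (g (a - b)) = r • (a - b)
      rw [← map_smul, ← map_smul, ← hx, ← LinearMap.comp_apply g f, hgf, LinearMap.id_apply]
    exact (Submodule.Quotient.eq _).2 ⟨_, hfg⟩

end Module.IsTorsionFree

section Pairing

variable {R M : Type*} [CommRing R] [AddCommGroup M] [Module R M]

noncomputable def wedgeTensorDualCoord (f g : Module.Dual R M) (v : M) :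
    ↥(⋀[R]^2 M) ⊗[R] Module.Dual R M →ₗ[R] R :=
  TensorProduct.lift ((LinearMap.mul R R).compl₁₂
    (exteriorPower.pairingDual R M 2 (exteriorPower.ιMulti R 2 ![f, g]))
    (Module.Dual.eval R M v))

theorem wedgeTensorDualCoord_tmul (f g : Module.Dual R M) (v x y : M) (φ : Module.Dual R M) :
    wedgeTensorDualCoord f g v (exteriorPower.ιMulti R 2 ![x, y] ⊗ₜ φ) =
      (f x * g y - g x * f y) * φ v := by
  simp [wedgeTensorDualCoord, Matrix.det_fin_two, sub_mul]

end Pairing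

theorem wedge_eq_ιMulti {M : Type*} [AddCommGroup M] [Module ℤ M] (x y : M) :
    wedge M x y = exteriorPower.ιMulti ℤ 2 ![x, y] :=
  Subtype.ext (by simp [wedge, ιMulti_apply])

theorem muMap_apply (n : ℕ) (x : Fin n → ℤ) :
    muMap n x = ∑ i, wedge (Fin n → ℤ) x (Pi.single i 1) ⊗ₜ LinearMap.proj i := by
  simp only [muMap, LinearMap.sum_apply]
  rfl

theorem wedgeTensorDualCoord_muMap {n : ℕ} {j k : Fin n} (hkj : k ≠ j) (x : Fin n → ℤ) :
    wedgeTensorDualCoord (LinearMap.proj j) (LinearMap.proj k) (Pi.single k 1) (muMap n x) =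
      x j := by
  simp only [muMap_apply, map_sum, wedge_eq_ιMulti, wedgeTensorDualCoord_tmul]
  simp [Pi.single_apply, hkj.symm]

noncomputable def muMapLeftInverse {n : ℕ} (s : Fin n → Fin n) :
    ↥(⋀[ℤ]^2 (Fin n → ℤ)) ⊗[ℤ] ((Fin n → ℤ) →ₗ[ℤ] ℤ) →ₗ[ℤ] (Fin n → ℤ) :=
  LinearMap.pi fun j => wedgeTensorDualCoord (LinearMap.proj j) (LinearMap.proj (s j))
    (Pi.single (s j) 1)

theorem muMapLeftInverse_comp_muMap {n : ℕ} {s : Fin n → Fin n} (hs : ∀ j, s j ≠ j) :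
    muMapLeftInverse s ∘ₗ muMap n = LinearMap.id :=
  LinearMap.ext fun x => funext fun j => wedgeTensorDualCoord_muMap (hs j) x

theorem stmt15 (n : ℕ) (hn : 2 ≤ n) :
    Function.Injective ⇑(muMap n) ∧
    NoZeroSMulDivisors ℤ
      ((↥(⋀[ℤ]^2 (Fin n → ℤ)) ⊗[ℤ] ((Fin n → ℤ) →ₗ[ℤ] ℤ)) ⧸ LinearMap.range (muMap n)) := by
  have : Nontrivial (Fin n) := Fin.nontrivial_iff_two_le.2 hn
  choose s hs using fun j : Fin n => exists_ne j
  have hleft := muMapLeftInverse_comp_muMap hs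
  refine ⟨Function.LeftInverse.injective (g := muMapLeftInverse s) (LinearMap.congr_fun hleft), ?_⟩
  have : Module.Free ℤ (↥(⋀[ℤ]^2 (Fin n → ℤ)) ⊗[ℤ] ((Fin n → ℤ) →ₗ[ℤ] ℤ)) := Module.Free.tensor
  have : Module.IsTorsionFree ℤ (↥(⋀[ℤ]^2 (Fin n → ℤ)) ⊗[ℤ] ((Fin n → ℤ) →ₗ[ℤ] ℤ)) :=
    Module.Free.instIsTorsionFree _ _
  have := Module.IsTorsionFree.quotient_range_of_leftInverse hleft
  have := Module.isTorsionFree_int_iff_isAddTorsionFree.1 this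
  infer_instance
end
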